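/- arXiv:2408.16403 — 2 statements merged into one kernel-verified Lean document; each statement's English description precedes it below -/
import Mathlib

section
/- Let T > 0 and C, L, M, C₀ ≥ 0 be constants. Let (x_i)_{i≥0} be a sequence of continuously differentiable functions x_i : [0,T] → ℝ with x_i(0) = 0 for all i, and let (τ_i)_{i≥0} be a sequence of nonnegative reals. Assume: (i) x₀'(t) ≤ C·x₀(t) + M·τ₀ for all t ∈ [0,T]; (ii) for every i ≥ 1 and t ∈ [0,T], x_i'(t) ≤ C·x_i(t) + (L/i)·∑_{j=0}^{i-1} x_j(t) + M·τ_i; (iii) for every i ≥ 1, (τ₀ + τ₁ + ⋯ + τ_{i-1})/i ≤ C₀·τ_i. Then there exists a constant C̄ ≥ 0, independent of i, such that x_i(t) ≤ C̄·τ_i for all i ≥ 0 and all t ∈ [0,T]. (Explicitly, one may take C̄ = C₁·e^{C₂T} with C₂ = e^{CT}·L·C₀ and any C₁ > e^{CT}·M·T large enough that x₀(t) ≤ C₁·τ₀ on [0,T].) -/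
open Set Finset Real Topology

/-! By strong induction on `i`, `x i t ≤ M τ_i e^{Kt}` with `K = C + L C₀ + 1`. Given the bound
for all `j < i`, the averaging hypothesis turns the history term `(L/i) ∑_{j<i} x_j` into
`L C₀ M τ_i e^{Kt}`, and the extra `1` in `K` absorbs the source `M τ_i ≤ M τ_i e^{Kt}`; so
`x_i - M τ_i e^{Kt}` satisfies `y' ≤ C y` with `y 0 ≤ 0`, and Grönwall gives `y ≤ 0`. -/

theorem nonpos_of_hasDerivAt_le_mul_self {f f' : ℝ → ℝ} {a b K : ℝ}
    (hf : ∀ t ∈ Icc a b, HasDerivAt f (f' t) t) (ha : f a ≤ 0)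
    (bound : ∀ t ∈ Ico a b, f' t ≤ K * f t) :
    ∀ t ∈ Icc a b, f t ≤ 0 := by
  intro t ht
  have hcont : ContinuousOn f (Icc a b) := fun s hs => (hf s hs).continuousAt.continuousWithinAt
  have hslope : ∀ s ∈ Ico a b, ∀ r, f' s < r → ∃ᶠ z in 𝓝[>] s, (z - s)⁻¹ * (f z - f s) < r :=
    fun s hs _ hr => (hf s (Ico_subset_Icc_self hs)).hasDerivWithinAt.liminf_right_slope_le hr
  simpa only [gronwallBound_ε0_δ0] using
    le_gronwallBound_of_liminf_deriv_right_le (K := K) (ε := 0) hcont hslope ha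
      (by simpa using bound) t ht

theorem le_mul_exp_of_hasDerivAt_le {f f' : ℝ → ℝ} {T C D m : ℝ}
    (hK : 0 ≤ C + D + 1) (hm : 0 ≤ m)
    (hf : ∀ t ∈ Icc 0 T, HasDerivAt f (f' t) t) (h0 : f 0 ≤ m)
    (bound : ∀ t ∈ Icc 0 T, f' t ≤ C * f t + D * (m * exp ((C + D + 1) * t)) + m) :
    ∀ t ∈ Icc 0 T, f t ≤ m * exp ((C + D + 1) * t) := by
  set K := C + D + 1
  have hexp : ∀ t, HasDerivAt (fun s => m * exp (K * s)) (m * (exp (K * t) * K)) t := fun t =>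
    (((hasDerivAt_id t).const_mul K).exp.const_mul m).congr_deriv (by simp)
  have hgap := nonpos_of_hasDerivAt_le_mul_self (K := C)
    (fun t ht => (hf t ht).sub (hexp t)) (by simpa using h0) fun t ht => by
      have hm_le : m ≤ m * exp (K * t) :=
        le_mul_of_one_le_right hm (one_le_exp (mul_nonneg hK ht.1))
      simp only [Pi.sub_apply]
      linarith [bound t (Ico_subset_Icc_self ht)]
  exact fun t ht => sub_nonpos.mp (hgap t ht)

theorem div_mul_sum_le_of_avg_le {L C₀ c : ℝ} {i : ℕ} {a τ : ℕ → ℝ} (hL : 0 ≤ L) (hc : 0 ≤ c)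
    (ha : ∀ j < i, a j ≤ c * τ j) (havg : (∑ j ∈ range i, τ j) / i ≤ C₀ * τ i) :
    L / i * ∑ j ∈ range i, a j ≤ L * C₀ * (c * τ i) :=
  calc L / i * ∑ j ∈ range i, a j ≤ L / i * (c * ∑ j ∈ range i, τ j) := by
        gcongr
        rw [mul_sum]
        exact sum_le_sum fun j hj => ha j (mem_range.mp hj)
    _ = L * c * ((∑ j ∈ range i, τ j) / i) := by ring
    _ ≤ L * c * (C₀ * τ i) := by gcongr
    _ = L * C₀ * (c * τ i) := by ring

theorem le_mul_exp_of_recursive_deriv_le {T C L M C₀ : ℝ}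
    (hK : 0 ≤ C + L * C₀ + 1) (hL : 0 ≤ L) (hM : 0 ≤ M)
    {x x' : ℕ → ℝ → ℝ} {τ : ℕ → ℝ} (hτ : ∀ i, 0 ≤ τ i)
    (hderiv : ∀ i, ∀ t ∈ Icc 0 T, HasDerivAt (x i) (x' i t) t)
    (hx0 : ∀ i, x i 0 ≤ M * τ i)
    (hrec : ∀ i, ∀ t ∈ Icc 0 T,
      x' i t ≤ C * x i t + L / i * ∑ j ∈ range i, x j t + M * τ i)
    (havg : ∀ i, (∑ j ∈ range i, τ j) / i ≤ C₀ * τ i) (i : ℕ) :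
    ∀ t ∈ Icc 0 T, x i t ≤ M * τ i * exp ((C + L * C₀ + 1) * t) := by
  induction i using Nat.strong_induction_on with
  | _ i ih =>
    refine le_mul_exp_of_hasDerivAt_le hK (mul_nonneg hM (hτ i)) (hderiv i) (hx0 i)
      fun t ht => ?_
    have hsum := div_mul_sum_le_of_avg_le (a := fun j => x j t) hL
      (c := M * exp ((C + L * C₀ + 1) * t)) (by positivity)
      (fun j hj => (ih j hj t ht).trans_eq (by ring)) (havg i)
    linarith [hrec i t ht]

theorem recursive_gronwall_general
    (T C L M C₀ : ℝ) (hC : 0 ≤ C) (hL : 0 ≤ L) (hM : 0 ≤ M) (hC₀ : 0 ≤ C₀)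
    (x x' : ℕ → ℝ → ℝ) (τ : ℕ → ℝ)
    (hderiv : ∀ i, ∀ t ∈ Set.Icc (0 : ℝ) T, HasDerivAt (x i) (x' i t) t)
    (hx0 : ∀ i, x i 0 = 0)
    (hτ : ∀ i, 0 ≤ τ i)
    (h0 : ∀ t ∈ Set.Icc (0 : ℝ) T, x' 0 t ≤ C * x 0 t + M * τ 0)
    (hrec : ∀ i : ℕ, 1 ≤ i → ∀ t ∈ Set.Icc (0 : ℝ) T,
      x' i t ≤ C * x i t + (L / (i : ℝ)) * (∑ j ∈ Finset.range i, x j t) + M * τ i)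
    (havg : ∀ i : ℕ, 1 ≤ i → (∑ j ∈ Finset.range i, τ j) / (i : ℝ) ≤ C₀ * τ i) :
    ∃ Cbar : ℝ, 0 ≤ Cbar ∧ ∀ i : ℕ, ∀ t ∈ Set.Icc (0 : ℝ) T, x i t ≤ Cbar * τ i := by
  have hrec_all : ∀ i, ∀ t ∈ Icc 0 T,
      x' i t ≤ C * x i t + L / i * ∑ j ∈ range i, x j t + M * τ i := by
    rintro (_ | i)
    · simpa using h0
    · exact hrec _ (Nat.succ_pos i)
  have havg_all : ∀ i, (∑ j ∈ range i, τ j) / i ≤ C₀ * τ i := by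
    rintro (_ | i)
    · simpa using mul_nonneg hC₀ (hτ 0)
    · exact havg _ (Nat.succ_pos i)
  have hK : 0 ≤ C + L * C₀ + 1 := by positivity
  refine ⟨M * exp ((C + L * C₀ + 1) * T), by positivity, fun i t ht => ?_⟩
  calc x i t ≤ M * τ i * exp ((C + L * C₀ + 1) * t) :=
        le_mul_exp_of_recursive_deriv_le hK hL hM hτ hderiv
          (fun i => (hx0 i).trans_le (mul_nonneg hM (hτ i))) hrec_all havg_all i t ht
    _ ≤ M * exp ((C + L * C₀ + 1) * T) * τ i := by
        rw [mul_right_comm]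
        exact mul_le_mul_of_nonneg_right (by gcongr; exact ht.2) (hτ i)

/-- Recursive Grönwall-type lemma: if each `x i` grows at most linearly in itself plus
the average of the previous `x j`'s plus `M * τ i`, and the `τ i` satisfy an averaging
condition, then `x i t ≤ C̄ * τ i` uniformly. -/
theorem recursive_gronwall
    (T C L M C₀ : ℝ) (hT : 0 < T) (hC : 0 ≤ C) (hL : 0 ≤ L) (hM : 0 ≤ M) (hC₀ : 0 ≤ C₀)
    (x x' : ℕ → ℝ → ℝ) (τ : ℕ → ℝ)
    (hderiv : ∀ i, ∀ t ∈ Set.Icc (0 : ℝ) T, HasDerivAt (x i) (x' i t) t)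
    (hcont : ∀ i, ContinuousOn (x' i) (Set.Icc (0 : ℝ) T))
    (hx0 : ∀ i, x i 0 = 0)
    (hτ : ∀ i, 0 ≤ τ i)
    (h0 : ∀ t ∈ Set.Icc (0 : ℝ) T, x' 0 t ≤ C * x 0 t + M * τ 0)
    (hrec : ∀ i : ℕ, 1 ≤ i → ∀ t ∈ Set.Icc (0 : ℝ) T,
      x' i t ≤ C * x i t + (L / (i : ℝ)) * (∑ j ∈ Finset.range i, x j t) + M * τ i)
    (havg : ∀ i : ℕ, 1 ≤ i → (∑ j ∈ Finset.range i, τ j) / (i : ℝ) ≤ C₀ * τ i) :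
    ∃ Cbar : ℝ, 0 ≤ Cbar ∧ ∀ i : ℕ, ∀ t ∈ Set.Icc (0 : ℝ) T, x i t ≤ Cbar * τ i :=
  recursive_gronwall_general T C L M C₀ hC hL hM hC₀ x x' τ hderiv hx0 hτ h0 hrec havg
end

section
/- Let T > 0 and A ≥ 0. Let u, w : [0,T] → [0,∞) be measurable, integrable nonnegative functions such that for every t ∈ [0,T], u(t) ≤ A·(∫₀^t u(s) ds + ∫₀^t w(s) ds). Then for every α > A, ∫₀^T e^{-α·t} u(t) dt ≤ (A/(α - A)) · ∫₀^T e^{-α·t} w(t) dt. -/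
open MeasureTheory Set intervalIntegral

/-!
Multiply the hypothesis by `e^{-αt}` and integrate over `[0, T]`. By Fubini,
`∫₀^T e^{-αt} ∫₀^t f = ∫₀^T (∫_s^T e^{-αt} dt) f(s) ds`, and the tail integral is at most
`e^{-αs} / α`; for `f = u + w ≥ 0` this gives `α E_u ≤ A (E_u + E_w)` for the weighted integrals
`E_u, E_w`, which rearranges to the claim because `α > A`.
-/

theorem integral_mul_primitive_eq_integral_tail_mul {a b : ℝ} (hab : a ≤ b) {f g : ℝ → ℝ}
    (hf : IntervalIntegrable f volume a b) (hg : IntervalIntegrable g volume a b) :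
    ∫ t in a..b, g t * ∫ s in a..t, f s = ∫ s in a..b, (∫ t in s..b, g t) * f s := by
  set μ := volume.restrict (Ioc a b)
  set F : ℝ × ℝ → ℝ := {p | p.2 ≤ p.1}.indicator fun p => g p.1 * f p.2
  have hF : Integrable F (μ.prod μ) :=
    (hg.1.mul_prod hf.1).indicator (measurableSet_le measurable_snd measurable_fst)
  have h_inner_s : ∀ t ∈ Ioc a b, ∫ s, F (t, s) ∂μ = g t * ∫ s in a..t, f s := by
    intro t ht
    have hslice : (fun s => F (t, s)) = (Iic t).indicator fun s => g t * f s := by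
      ext s; simp [F, indicator_apply]
    rw [hslice, MeasureTheory.integral_indicator measurableSet_Iic,
      Measure.restrict_restrict measurableSet_Iic, Iic_inter_Ioc_of_le ht.2,
      MeasureTheory.integral_const_mul, integral_of_le ht.1.le]
  have h_inner_t : ∀ s ∈ Ioc a b, ∫ t, F (t, s) ∂μ = (∫ t in s..b, g t) * f s := by
    intro s hs
    have hslice : (fun t => F (t, s)) = (Ici s).indicator fun t => g t * f s := by
      ext t; simp [F, indicator_apply]
    have hset : Ici s ∩ Ioc a b = Icc s b := by
      ext t; simp only [mem_inter_iff, mem_Ici, mem_Ioc, mem_Icc]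
      constructor
      · rintro ⟨hst, -, htb⟩; exact ⟨hst, htb⟩
      · rintro ⟨hst, htb⟩; exact ⟨hst, hs.1.trans_le hst, htb⟩
    rw [hslice, MeasureTheory.integral_indicator measurableSet_Ici,
      Measure.restrict_restrict measurableSet_Ici, hset,
      MeasureTheory.integral_mul_const, integral_Icc_eq_integral_Ioc, integral_of_le hs.2]
  calc ∫ t in a..b, g t * ∫ s in a..t, f s
      = ∫ t, ∫ s, F (t, s) ∂μ ∂μ := by
        rw [integral_of_le hab]
        exact setIntegral_congr_fun measurableSet_Ioc fun t ht => (h_inner_s t ht).symm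
    _ = ∫ s, ∫ t, F (t, s) ∂μ ∂μ := integral_integral_swap hF
    _ = ∫ s in a..b, (∫ t in s..b, g t) * f s := by
        rw [integral_of_le hab]
        exact setIntegral_congr_fun measurableSet_Ioc h_inner_t

theorem integral_exp_neg_mul_le {α : ℝ} (hα : 0 < α) {s b : ℝ} (hsb : s ≤ b) :
    ∫ t in s..b, Real.exp (-α * t) ≤ Real.exp (-α * s) / α := by
  calc ∫ t in s..b, Real.exp (-α * t)
      ≤ ∫ t in Ioi s, Real.exp (-α * t) := by
        rw [integral_of_le hsb]
        exact setIntegral_mono_set (exp_neg_integrableOn_Ioi s hα)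
          (.of_forall fun t => (Real.exp_pos _).le) Ioc_subset_Ioi_self.eventuallyLE
    _ = Real.exp (-α * s) / α := by
        rw [integral_exp_mul_Ioi (neg_lt_zero.mpr hα), div_neg, neg_div, neg_neg]

theorem mul_integral_exp_neg_mul_mul_primitive_le {α : ℝ} (hα : 0 < α) {a b : ℝ} (hab : a ≤ b)
    {f : ℝ → ℝ} (hf : IntervalIntegrable f volume a b) (hf_nonneg : ∀ s ∈ Icc a b, 0 ≤ f s) :
    α * ∫ t in a..b, Real.exp (-α * t) * ∫ s in a..t, f s
      ≤ ∫ s in a..b, Real.exp (-α * s) * f s := by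
  have hexp : Continuous fun t => Real.exp (-α * t) := by fun_prop
  have htail : ContinuousOn (fun s => ∫ t in s..b, Real.exp (-α * t)) (uIcc a b) :=
    continuousOn_primitive_interval_left hexp.integrableOn_uIcc
  rw [integral_mul_primitive_eq_integral_tail_mul hab hf (hexp.intervalIntegrable a b),
    ← intervalIntegral.integral_const_mul]
  refine intervalIntegral.integral_mono_on hab ((hf.continuousOn_mul htail).const_mul α)
    (hf.continuousOn_mul hexp.continuousOn) fun s hs => ?_
  rw [← mul_assoc]
  exact mul_le_mul_of_nonneg_right
    ((le_div_iff₀' hα).mp (integral_exp_neg_mul_le hα hs.2)) (hf_nonneg s hs)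

theorem mul_integral_exp_neg_mul_le_of_le_mul_primitive {α A a b : ℝ} (hα : 0 < α) (hA : 0 ≤ A)
    (hab : a ≤ b) {v f : ℝ → ℝ} (hv : IntervalIntegrable v volume a b)
    (hf : IntervalIntegrable f volume a b) (hf_nonneg : ∀ s ∈ Icc a b, 0 ≤ f s)
    (hvf : ∀ t ∈ Icc a b, v t ≤ A * ∫ s in a..t, f s) :
    α * ∫ t in a..b, Real.exp (-α * t) * v t ≤ A * ∫ t in a..b, Real.exp (-α * t) * f t := by
  have hexp : Continuous fun t => Real.exp (-α * t) := by fun_prop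
  have hprimitive : ContinuousOn (fun t => ∫ s in a..t, f s) (uIcc a b) :=
    continuousOn_primitive_interval' hf left_mem_uIcc
  have hweighted : ∀ t ∈ Icc a b,
      Real.exp (-α * t) * v t ≤ A * (Real.exp (-α * t) * ∫ s in a..t, f s) := fun t ht => by
    rw [mul_left_comm]
    exact mul_le_mul_of_nonneg_left (hvf t ht) (Real.exp_pos _).le
  calc α * ∫ t in a..b, Real.exp (-α * t) * v t
      ≤ α * (A * ∫ t in a..b, Real.exp (-α * t) * ∫ s in a..t, f s) := by
        gcongr
        exact (intervalIntegral.integral_mono_on hab (hv.continuousOn_mul hexp.continuousOn)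
          ((hexp.continuousOn.mul hprimitive).intervalIntegrable.const_mul A)
          hweighted).trans_eq (intervalIntegral.integral_const_mul _ _)
    _ = A * (α * ∫ t in a..b, Real.exp (-α * t) * ∫ s in a..t, f s) := mul_left_comm _ _ _
    _ ≤ A * ∫ t in a..b, Real.exp (-α * t) * f t := by
        gcongr
        exact mul_integral_exp_neg_mul_mul_primitive_le hα hab hf hf_nonneg

/-- Analytic core of the contraction estimate: if `u(t) ≤ A (∫₀^t u + ∫₀^t w)` on `[0,T]`
for nonnegative integrable `u, w`, then for any `α > A`,
`∫₀^T e^{-α t} u ≤ (A/(α-A)) ∫₀^T e^{-α t} w`. -/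
theorem exp_weighted_contraction_bound
    (T A : ℝ) (hT : 0 < T) (hA : 0 ≤ A)
    (u w : ℝ → ℝ)
    (hu_nonneg : ∀ t ∈ Set.Icc (0 : ℝ) T, 0 ≤ u t)
    (hw_nonneg : ∀ t ∈ Set.Icc (0 : ℝ) T, 0 ≤ w t)
    (hu_int : MeasureTheory.IntegrableOn u (Set.Icc (0 : ℝ) T))
    (hw_int : MeasureTheory.IntegrableOn w (Set.Icc (0 : ℝ) T))
    (hineq : ∀ t ∈ Set.Icc (0 : ℝ) T,
      u t ≤ A * ((∫ s in (0 : ℝ)..t, u s) + ∫ s in (0 : ℝ)..t, w s)) :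
    ∀ α : ℝ, A < α →
      ∫ t in (0 : ℝ)..T, Real.exp (-α * t) * u t
        ≤ (A / (α - A)) * ∫ t in (0 : ℝ)..T, Real.exp (-α * t) * w t := by
  intro α hαA
  have hexp : Continuous fun t => Real.exp (-α * t) := by fun_prop
  have hu : IntervalIntegrable u volume 0 T :=
    (intervalIntegrable_iff_integrableOn_Icc_of_le hT.le).mpr hu_int
  have hw : IntervalIntegrable w volume 0 T :=
    (intervalIntegrable_iff_integrableOn_Icc_of_le hT.le).mpr hw_int
  have hineq_sum : ∀ t ∈ Icc 0 T, u t ≤ A * ∫ s in (0 : ℝ)..t, u s + w s := fun t ht => by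
    have hsub : uIcc 0 t ⊆ uIcc 0 T := uIcc_subset_uIcc_left (by rwa [uIcc_of_le hT.le])
    rw [intervalIntegral.integral_add (hu.mono_set hsub) (hw.mono_set hsub)]
    exact hineq t ht
  have hsplit : ∫ t in (0 : ℝ)..T, Real.exp (-α * t) * (u t + w t)
      = (∫ t in (0 : ℝ)..T, Real.exp (-α * t) * u t)
        + ∫ t in (0 : ℝ)..T, Real.exp (-α * t) * w t := by
    simp only [mul_add]
    exact intervalIntegral.integral_add (hu.continuousOn_mul hexp.continuousOn)
      (hw.continuousOn_mul hexp.continuousOn)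
  have key := mul_integral_exp_neg_mul_le_of_le_mul_primitive (hA.trans_lt hαA) hA hT.le hu
    (hu.add hw) (fun s hs => add_nonneg (hu_nonneg s hs) (hw_nonneg s hs)) hineq_sum
  rw [hsplit] at key
  rw [div_mul_eq_mul_div, le_div_iff₀ (sub_pos.mpr hαA)]
  linarith
end
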